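/- With the notation of the standard-form disintegration: if p_x^Q ρ_x^Q = ⊞_y (α_{yx} ⊗ q_y σ_y) and likewise the pullback ζ∘R on B has densities q_y^R σ_y^R, then the double pullback satisfies ζ∘R∘Q = Σ_x tr((⊞_y α_{yx} ⊗ q_y^R σ_y^R) · ); i.e., the density of ζ∘R∘Q on the x-th block is ⊞_{y∈Y} (α_{yx} ⊗ q_y^R σ_y^R). -/

import Mathlib

/-!
On each block, `tr((σ ⊗ α) B) = tr(σ · tr₂((1 ⊗ α) B))` because `σ ⊗ α = (σ ⊗ 1)(1 ⊗ α)`, and the trace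
against a block-diagonal matrix only sees the diagonal blocks. Summing over the blocks `y` and then
exchanging the sums over `x` and `y` turns `∑_y q_y tr(σ_y Q(A)_y)` into `∑_x tr((⊞_y q_y σ_y ⊗ α_{yx}) A_x)`.
-/
open scoped Kronecker Matrix ComplexOrder

/-- Matrix logarithm of a Hermitian matrix, via the spectral decomposition and the
real logarithm (with the convention `Real.log 0 = 0`, implementing `0 log 0 = 0`).
Defined to be `0` on non-Hermitian matrices. -/
noncomputable def matLog {n : Type*} [Fintype n] [DecidableEq n] (M : Matrix n n ℂ) :
    Matrix n n ℂ :=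
  if hM : M.IsHermitian then
    (hM.eigenvectorUnitary : Matrix n n ℂ) *
      Matrix.diagonal (fun i => (Real.log (hM.eigenvalues i) : ℂ)) *
      (star (hM.eigenvectorUnitary : Matrix n n ℂ))
  else 0

/-- A finite direct sum of complex matrix algebras. -/
abbrev MatAlg {X : Type*} (m : X → ℕ) := ∀ x, Matrix (Fin (m x)) (Fin (m x)) ℂ

/-- The density (family of matrices) of a linear functional on a direct sum of
matrix algebras, so that `ω A = ∑ x, (density m ω x * A x).trace`. -/
noncomputable def density {X : Type*} [Fintype X] [DecidableEq X] (m : X → ℕ)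
    (ω : MatAlg m →ₗ[ℂ] ℂ) (x : X) : Matrix (Fin (m x)) (Fin (m x)) ℂ :=
  Matrix.of fun i j => ω (Pi.single x (Matrix.single j i 1))

/-- Umegaki relative entropy (trace formula) of two functionals on a direct sum
of matrix algebras, in terms of their densities. -/
noncomputable def relEntS {X : Type*} [Fintype X] [DecidableEq X] (m : X → ℕ)
    (ω ω' : MatAlg m →ₗ[ℂ] ℂ) : ℂ :=
  ∑ x, ((density m ω x) * (matLog (density m ω x) - matLog (density m ω' x))).trace

/-- Extended-real-valued Umegaki relative entropy: equals the trace formula when the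
absolute continuity condition `ω ≪ ω'` holds (kernel containment of densities), and
`∞` otherwise. -/
noncomputable def relEntE {X : Type*} [Fintype X] [DecidableEq X] (m : X → ℕ)
    (ω ω' : MatAlg m →ₗ[ℂ] ℂ) : EReal :=
  open scoped Classical in
  if ∀ x (v : Fin (m x) → ℂ), (density m ω' x) *ᵥ v = 0 → (density m ω x) *ᵥ v = 0
  then ((relEntS m ω ω').re : EReal) else ⊤

/-- A state on a complex star algebra: unital and positive. -/
def IsState {A : Type*} [Ring A] [StarRing A] [Algebra ℂ A] (ω : A →ₗ[ℂ] ℂ) : Prop :=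
  ω 1 = 1 ∧ ∀ a : A, 0 ≤ ω (star a * a)

/-- A completely positive unital map between complex star algebras: unital, and every
matrix amplification maps positive elements (of the form `Nᴴ * N`) to positive elements. -/
def IsCPU {A B : Type*} [Ring A] [StarRing A] [Algebra ℂ A]
    [Ring B] [StarRing B] [Algebra ℂ B] (Q : A →ₗ[ℂ] B) : Prop :=
  Q 1 = 1 ∧ ∀ (k : ℕ) (N : Matrix (Fin k) (Fin k) A),
    ∃ L : Matrix (Fin k) (Fin k) B, (Nᴴ * N).map Q = Lᴴ * L

namespace Matrix

variable {R : Type*} {m n p : Type*} [Fintype p]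

def partialTraceRight [AddCommMonoid R] (B : Matrix (m × p) (n × p) R) : Matrix m n R :=
  of fun i j => ∑ k, B (i, k) (j, k)

theorem one_kronecker_mul_apply [Fintype m] [DecidableEq m] [Semiring R]
    (α : Matrix p p R) (B : Matrix (m × p) (n × p) R) (i : m) (k : p) (j : n) (l : p) :
    (((1 : Matrix m m R) ⊗ₖ α) * B) (i, k) (j, l) = ∑ k', α k k' * B (i, k') (j, l) := by
  simp [mul_apply, one_apply, Fintype.sum_prod_type, ite_mul]

theorem trace_kronecker_one_mul [Fintype m] [DecidableEq p] [CommSemiring R]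
    (σ : Matrix m m R) (C : Matrix (m × p) (m × p) R) :
    ((σ ⊗ₖ (1 : Matrix p p R)) * C).trace = (σ * partialTraceRight C).trace := by
  simp only [trace, diag, mul_apply, partialTraceRight, of_apply, kroneckerMap_apply, one_apply,
    Fintype.sum_prod_type, Finset.mul_sum, mul_ite, mul_one, mul_zero, ite_mul, zero_mul]
  simp only [Finset.sum_ite_eq, Finset.mem_univ, if_true]
  exact Finset.sum_congr rfl fun _ _ => Finset.sum_comm

theorem trace_kronecker_mul [Fintype m] [DecidableEq m] [DecidableEq p] [CommSemiring R]
    (σ : Matrix m m R) (α : Matrix p p R) (B : Matrix (m × p) (m × p) R) :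
    ((σ ⊗ₖ α) * B).trace = (σ * partialTraceRight ((1 ⊗ₖ α) * B)).trace := by
  rw [← trace_kronecker_one_mul, ← Matrix.mul_assoc, ← mul_kronecker_mul, Matrix.mul_one,
    Matrix.one_mul]

theorem trace_blockDiagonal'_mul {ι : Type*} [Fintype ι] [DecidableEq ι] {o : ι → Type*}
    [∀ i, Fintype (o i)] [NonUnitalNonAssocSemiring R] (M : ∀ i, Matrix (o i) (o i) R)
    (A : Matrix (Σ i, o i) (Σ i, o i) R) :
    (blockDiagonal' M * A).trace = ∑ i, (M i * A.submatrix (Sigma.mk i) (Sigma.mk i)).trace := by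
  simp only [trace, diag, mul_apply, Fintype.sum_sigma, submatrix_apply]
  refine Finset.sum_congr rfl fun i _ => Finset.sum_congr rfl fun a _ => ?_
  rw [Finset.sum_eq_single i]
  · simp only [blockDiagonal'_apply_eq]
  · intro j _ hj
    exact Finset.sum_eq_zero fun b _ => by rw [blockDiagonal'_apply_ne _ _ _ (Ne.symm hj), zero_mul]
  · simp

end Matrix

theorem stmt19_general {X Y : Type*} [Fintype X] [Fintype Y] [DecidableEq X] [DecidableEq Y]
    (n : Y → ℕ) (c : Y → X → ℕ)
    (α : ∀ y x, Matrix (Fin (c y x)) (Fin (c y x)) ℂ)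
    (qR : Y → ℝ) (σR : ∀ y, Matrix (Fin (n y)) (Fin (n y)) ℂ)
    (Q : (∀ x, Matrix (Σ y, Fin (n y) × Fin (c y x)) (Σ y, Fin (n y) × Fin (c y x)) ℂ) →
      (∀ y, Matrix (Fin (n y)) (Fin (n y)) ℂ))
    (hQ : ∀ A y, Q A y = Matrix.of fun i j =>
      ∑ x, ∑ k : Fin (c y x), ∑ k' : Fin (c y x),
        α y x k k' * A x ⟨y, (i, k')⟩ ⟨y, (j, k)⟩)
    (φ : (∀ y, Matrix (Fin (n y)) (Fin (n y)) ℂ) → ℂ)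
    (hφ : ∀ B, φ B = ∑ y, (qR y : ℂ) * (σR y * B y).trace) :
    ∀ A, φ (Q A) =
      ∑ x, ((Matrix.blockDiagonal' (fun y => (qR y : ℂ) • (σR y ⊗ₖ α y x))) * A x).trace := by
  intro A
  have hQA : ∀ y, Q A y =
      ∑ x, ((1 ⊗ₖ α y x) * (A x).submatrix (Sigma.mk y) (Sigma.mk y)).partialTraceRight := by
    intro y
    ext i j
    simp [hQ, Matrix.sum_apply, Matrix.partialTraceRight, Matrix.one_kronecker_mul_apply]
  simp_rw [hφ, hQA, Matrix.trace_blockDiagonal'_mul, Matrix.smul_mul, Matrix.trace_smul,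
    Matrix.trace_kronecker_mul, Matrix.mul_sum, Matrix.trace_sum, Finset.mul_sum, smul_eq_mul]
  exact Finset.sum_comm

/-- With the standard-form disintegration notation: if the hypothesis
`Q` has components `Q_{yx}(A_x) = tr_{M_{c_{yx}}}((α_{yx} ⊗ 1_{n_y}) A_{x;yy})` and the
pullback state `ζ∘R = ∑_y q^R_y tr(σ^R_y ·)` on `B`, then the double pullback satisfies
`ζ∘R∘Q = ∑_x tr((⊞_y α_{yx} ⊗ q^R_y σ^R_y) ·)`, i.e. the density of `ζ∘R∘Q` on the
`x`-th block is `⊞_y (α_{yx} ⊗ q^R_y σ^R_y)`. -/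
theorem stmt19 {X Y : Type*} [Fintype X] [Fintype Y] [DecidableEq X] [DecidableEq Y]
    (n : Y → ℕ) (c : Y → X → ℕ)
    (α : ∀ y x, Matrix (Fin (c y x)) (Fin (c y x)) ℂ)
    (hα : ∀ y x, (α y x).PosSemidef)
    (qR : Y → ℝ) (σR : ∀ y, Matrix (Fin (n y)) (Fin (n y)) ℂ)
    (hqR : ∀ y, 0 < qR y) (hσR : ∀ y, (σR y).PosDef) (hσRtr : ∀ y, (σR y).trace = 1)
    (Q : (∀ x, Matrix (Σ y, Fin (n y) × Fin (c y x)) (Σ y, Fin (n y) × Fin (c y x)) ℂ) →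
      (∀ y, Matrix (Fin (n y)) (Fin (n y)) ℂ))
    (hQ : ∀ A y, Q A y = Matrix.of fun i j =>
      ∑ x, ∑ k : Fin (c y x), ∑ k' : Fin (c y x),
        α y x k k' * A x ⟨y, (i, k')⟩ ⟨y, (j, k)⟩)
    (φ : (∀ y, Matrix (Fin (n y)) (Fin (n y)) ℂ) → ℂ)
    (hφ : ∀ B, φ B = ∑ y, (qR y : ℂ) * (σR y * B y).trace) :
    ∀ A, φ (Q A) =
      ∑ x, ((Matrix.blockDiagonal' (fun y => (qR y : ℂ) • (σR y ⊗ₖ α y x))) * A x).trace :=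
  stmt19_general n c α qR σR Q hQ φ hφ
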